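/- arXiv:1812.06295 — 3 statements merged into one kernel-verified Lean document; each statement's English description precedes it below -/
import Mathlib

section
/- Let M be an irreducible invertible symmetric M-matrix and let X be the diagonal matrix with X_{ii} = (M⁻¹ 1)_i, where 1 is the all-ones vector. Then XMX is a symmetric diagonally dominant matrix with nonpositive off-diagonal entries, i.e., (XMX)_{ij} ≤ 0 for i ≠ j and XMX·1 ≥ 0 entrywise. -/
open Matrix

private lemma XMX_det_map' {n : ℕ} {B : Matrix (Fin n) (Fin n) ℝ} (h : B.det = 0) :
    ((-B).map (algebraMap ℝ ℂ)).det = 0 := by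
  have : (-B).map (algebraMap ℝ ℂ) = (algebraMap ℝ ℂ).mapMatrix (-B) := rfl
  rw [this, ← RingHom.map_det]
  simp [Matrix.det_neg, h]

private lemma XMX_spec_pos {n : ℕ} (M A : Matrix (Fin n) (Fin n) ℝ) (s : ℝ)
    (hM : M = s • (1 : Matrix (Fin n) (Fin n) ℝ) - A)
    (hρ : ∀ z ∈ spectrum ℂ (A.map (algebraMap ℝ ℂ)), ‖z‖ < s)
    (μ : ℝ) (hμ : μ ∈ spectrum ℝ M) : 0 < μ := by
  rw [spectrum.mem_iff] at hμ
  have hdet : (Matrix.scalar (Fin n) μ - M).det = 0 := by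
    by_contra h
    exact hμ ((Matrix.isUnit_iff_isUnit_det _).mpr (isUnit_iff_ne_zero.mpr h))
  have hmem : ((s - μ : ℝ) : ℂ) ∈ spectrum ℂ (A.map (algebraMap ℝ ℂ)) := by
    rw [spectrum.mem_iff]
    intro hu
    rw [Matrix.isUnit_iff_isUnit_det, isUnit_iff_ne_zero] at hu
    apply hu
    have key : algebraMap ℂ (Matrix (Fin n) (Fin n) ℂ) ((s - μ : ℝ) : ℂ) - A.map (algebraMap ℝ ℂ)
        = (-(Matrix.scalar (Fin n) μ - M)).map (algebraMap ℝ ℂ) := by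
      have h1 : -(Matrix.scalar (Fin n) μ - M) = Matrix.scalar (Fin n) (s - μ) - A := by
        rw [hM]
        ext i j
        simp [Matrix.scalar, Matrix.algebraMap_eq_diagonal, Matrix.diagonal,
          Matrix.one_apply, Matrix.sub_apply, Matrix.smul_apply]
        split <;> ring
      rw [h1]
      ext i j
      simp [Matrix.scalar, Matrix.algebraMap_eq_diagonal, Matrix.diagonal,
        Matrix.one_apply, Matrix.sub_apply, Matrix.map_apply]
      split <;> simp
    rw [key, XMX_det_map' hdet]
  have := hρ _ hmem
  rw [Complex.norm_real, Real.norm_eq_abs, abs_sub_lt_iff] at this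
  linarith [this.2]

private lemma XMX_inv_one_nonneg {n : ℕ} (M : Matrix (Fin n) (Fin n) ℝ)
    (hpsd : M.PosSemidef)
    (hinv : IsUnit M.det)
    (hZ : ∀ i j, i ≠ j → M i j ≤ 0) :
    ∀ i, 0 ≤ (M⁻¹ *ᵥ (fun _ => (1 : ℝ))) i := by
  set x : Fin n → ℝ := M⁻¹ *ᵥ (fun _ => (1 : ℝ)) with hx
  have hMx : M *ᵥ x = fun _ => (1 : ℝ) := by
    rw [hx, Matrix.mulVec_mulVec, Matrix.mul_nonsing_inv M hinv, Matrix.one_mulVec]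
  set y : Fin n → ℝ := fun i => max (-(x i)) 0 with hy
  set p : Fin n → ℝ := fun i => max (x i) 0 with hp
  have hyn : ∀ i, 0 ≤ y i := fun i => le_max_right _ _
  have hpn : ∀ i, 0 ≤ p i := fun i => le_max_right _ _
  have hxpy : ∀ i, x i = p i - y i := by
    intro i
    simp only [hy, hp]
    rcases le_total (x i) 0 with h | h
    · rw [max_eq_right h, max_eq_left (by linarith)]; ring
    · rw [max_eq_left h, max_eq_right (by linarith)]; ring
  have h1 : y ⬝ᵥ (M *ᵥ p) ≤ 0 := by
    rw [dotProduct]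
    apply Finset.sum_nonpos
    intro i _
    rw [mulVec, dotProduct, Finset.mul_sum]
    apply Finset.sum_nonpos
    intro j _
    rcases eq_or_ne i j with rfl | hij
    · rcases le_total (x i) 0 with h | h
      · have : p i = 0 := max_eq_right h
        simp [this]
      · have : y i = 0 := max_eq_right (by linarith)
        simp [this]
    · exact mul_nonpos_of_nonneg_of_nonpos (hyn i)
        (mul_nonpos_of_nonpos_of_nonneg (hZ i j hij) (hpn j))
  have h2 : (0:ℝ) ≤ y ⬝ᵥ (M *ᵥ x) := by
    rw [hMx]
    exact Finset.sum_nonneg fun i _ => by simpa using hyn i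
  have h3 : y ⬝ᵥ (M *ᵥ y) ≤ 0 := by
    have hMd : M *ᵥ x = M *ᵥ p - M *ᵥ y := by
      rw [show x = p - y from funext hxpy, Matrix.mulVec_sub]
    have : y ⬝ᵥ (M *ᵥ x) = y ⬝ᵥ (M *ᵥ p) - y ⬝ᵥ (M *ᵥ y) := by
      rw [hMd, dotProduct_sub]
    linarith
  have h4 : (0:ℝ) ≤ y ⬝ᵥ (M *ᵥ y) := by
    have := hpsd.dotProduct_mulVec_nonneg y
    simpa using this
  have h5 : star y ⬝ᵥ (M *ᵥ y) = 0 := by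
    have : y ⬝ᵥ (M *ᵥ y) = 0 := le_antisymm h3 h4
    simpa using this
  have h6 : M *ᵥ y = 0 := (hpsd.dotProduct_mulVec_zero_iff y).mp h5
  have hy0 : y = 0 := by
    have : M⁻¹ *ᵥ (M *ᵥ y) = y := by
      rw [Matrix.mulVec_mulVec, Matrix.nonsing_inv_mul M hinv, Matrix.one_mulVec]
    rw [h6, Matrix.mulVec_zero] at this
    exact this.symm
  intro i
  have : y i = 0 := congrFun hy0 i
  simp only [hy] at this
  have := le_of_max_le_left (le_of_eq this)
  linarith

/-- For an irreducible invertible symmetric M-matrix `M`, with `X = diag(M⁻¹ 1)`,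
the matrix `X * M * X` is symmetric with nonpositive off-diagonal entries and
`(X * M * X) 1 ≥ 0` entrywise (i.e. it is SDD with nonpositive off-diagonals). -/
theorem XMX_is_SDD {n : ℕ} (M A : Matrix (Fin n) (Fin n) ℝ) (s : ℝ)
    (hM : M = s • (1 : Matrix (Fin n) (Fin n) ℝ) - A)
    (hs : 0 < s)
    (hA : ∀ i j, 0 ≤ A i j)
    (hρ : ∀ z ∈ spectrum ℂ (A.map (algebraMap ℝ ℂ)), ‖z‖ < s)
    (hsym : M.IsSymm)
    (hinv : IsUnit M.det)
    (hirr : ∀ S : Set (Fin n), S ≠ ∅ → S ≠ Set.univ →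
      ∃ i ∈ S, ∃ j ∈ Sᶜ, M i j ≠ 0)
    (X : Matrix (Fin n) (Fin n) ℝ)
    (hX : X = Matrix.diagonal (M⁻¹ *ᵥ (fun _ => (1 : ℝ)))) :
    (X * M * X).IsSymm ∧
    (∀ i j, i ≠ j → (X * M * X) i j ≤ 0) ∧
    (∀ i, 0 ≤ ((X * M * X) *ᵥ (fun _ => (1 : ℝ))) i) := by
  have hH : M.IsHermitian := by
    rw [Matrix.IsHermitian, Matrix.conjTranspose_eq_transpose_of_trivial]
    exact hsym
  have hpsd : M.PosSemidef := Matrix.IsHermitian.posSemidef_iff_eigenvalues_nonneg hH |>.mpr fun i =>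
    (XMX_spec_pos M A s hM hρ _ (hH.eigenvalues_mem_spectrum_real i)).le
  have hZ : ∀ i j, i ≠ j → M i j ≤ 0 := by
    intro i j hij
    rw [hM]
    simp only [Matrix.sub_apply, Matrix.smul_apply, Matrix.one_apply_ne hij, smul_zero]
    linarith [hA i j]
  set d : Fin n → ℝ := M⁻¹ *ᵥ (fun _ => (1 : ℝ)) with hd
  have hdn : ∀ i, 0 ≤ d i := XMX_inv_one_nonneg M hpsd hinv hZ
  have hentry : ∀ i j, (X * M * X) i j = d i * M i j * d j := by
    intro i j
    rw [hX, Matrix.mul_diagonal, Matrix.diagonal_mul]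
  have hMd : M *ᵥ d = fun _ => (1 : ℝ) := by
    rw [hd, Matrix.mulVec_mulVec, Matrix.mul_nonsing_inv M hinv, Matrix.one_mulVec]
  refine ⟨?_, ?_, ?_⟩
  · ext i j
    rw [Matrix.transpose_apply, hentry, hentry,
      show M j i = M i j from (congrFun (congrFun hsym j) i).symm]
    ring
  · intro i j hij
    rw [hentry]
    exact mul_nonpos_of_nonpos_of_nonneg
      (mul_nonpos_of_nonneg_of_nonpos (hdn i) (hZ i j hij)) (hdn j)
  · intro i
    have : ((X * M * X) *ᵥ (fun _ => (1 : ℝ))) i = d i := by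
      rw [Matrix.mulVec, dotProduct]
      have : ∀ j, (X * M * X) i j * 1 = d i * (M i j * d j) := by
        intro j; rw [hentry]; ring
      rw [Finset.sum_congr rfl fun j _ => this j, ← Finset.mul_sum]
      have h2 : ∑ j, M i j * d j = (M *ᵥ d) i := rfl
      rw [h2, hMd]
      simp
    rw [this]
    exact hdn i
end

section
/- Let A be a symmetric diagonally dominant n×n matrix with nonpositive off-diagonal entries and let α ≥ 0. Then B := A(I + αA)⁻¹ is also a symmetric diagonally dominant matrix with nonpositive off-diagonal entries. -/
open Matrix

private lemma key_mono {n : ℕ} (M : Matrix (Fin n) (Fin n) ℝ)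
    (hoff : ∀ i j, i ≠ j → M i j ≤ 0)
    (hrow : ∀ i, 0 < (M *ᵥ (fun _ => (1 : ℝ))) i)
    (x : Fin n → ℝ) (hx : ∀ i, 0 ≤ (M *ᵥ x) i) : ∀ i, 0 ≤ x i := by
  by_contra h
  push_neg at h
  obtain ⟨i, hi⟩ := h
  obtain ⟨i0, -, hmin⟩ := Finset.exists_min_image Finset.univ x ⟨i, Finset.mem_univ i⟩
  have hx0 : x i0 < 0 := lt_of_le_of_lt (hmin i (Finset.mem_univ i)) hi
  have h1 : (M *ᵥ x) i0 ≤ (M *ᵥ (fun _ => (1 : ℝ))) i0 * x i0 := by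
    simp only [mulVec, dotProduct]
    rw [Finset.sum_mul]
    apply Finset.sum_le_sum
    intro j _
    rcases eq_or_ne j i0 with rfl | hji
    · simp
    · have hM := hoff i0 j (fun hc => hji hc.symm)
      have hxj := hmin j (Finset.mem_univ j)
      nlinarith
  nlinarith [hx i0, hrow i0]

/-- If `A` is symmetric diagonally dominant with nonpositive off-diagonal entries
(equivalently `A 1 ≥ 0` entrywise) and `α ≥ 0`, then `B = A (I + α A)⁻¹` is also
symmetric with nonpositive off-diagonal entries and `B 1 ≥ 0` entrywise. -/
theorem SDD_stable_under_inverse_shift {n : ℕ} (A : Matrix (Fin n) (Fin n) ℝ) (α : ℝ)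
    (hsym : A.IsSymm)
    (hoff : ∀ i j, i ≠ j → A i j ≤ 0)
    (hdd : ∀ i, 0 ≤ (A *ᵥ (fun _ => (1 : ℝ))) i)
    (hα : 0 ≤ α) :
    (A * (1 + α • A)⁻¹).IsSymm ∧
    (∀ i j, i ≠ j → (A * (1 + α • A)⁻¹) i j ≤ 0) ∧
    (∀ i, 0 ≤ ((A * (1 + α • A)⁻¹) *ᵥ (fun _ => (1 : ℝ))) i) := by
  rcases eq_or_lt_of_le hα with rfl | hα0
  · simp only [zero_smul, add_zero, inv_one, mul_one]
    exact ⟨hsym, hoff, hdd⟩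
  set M : Matrix (Fin n) (Fin n) ℝ := 1 + α • A with hM
  -- off-diagonal entries of M are nonpositive
  have hMoff : ∀ i j, i ≠ j → M i j ≤ 0 := by
    intro i j hij
    have : M i j = α * A i j := by
      simp [hM, Matrix.add_apply, Matrix.one_apply_ne hij]
    rw [this]
    exact mul_nonpos_of_nonneg_of_nonpos hα (hoff i j hij)
  -- row sums of M are at least 1
  have hMrow1 : ∀ i, (1 : ℝ) ≤ (M *ᵥ (fun _ => (1 : ℝ))) i := by
    intro i
    have : M *ᵥ (fun _ => (1 : ℝ)) =
        (fun _ => (1 : ℝ)) + α • (A *ᵥ (fun _ => (1 : ℝ))) := by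
      rw [hM, Matrix.add_mulVec, Matrix.one_mulVec, Matrix.smul_mulVec]
    rw [this]
    have := hdd i
    simp only [Pi.add_apply, Pi.smul_apply, smul_eq_mul]
    nlinarith
  have hMrow : ∀ i, 0 < (M *ᵥ (fun _ => (1 : ℝ))) i := fun i =>
    lt_of_lt_of_le one_pos (hMrow1 i)
  -- M is invertible
  have hdet : M.det ≠ 0 := by
    intro hd
    obtain ⟨v, hv0, hv⟩ := (Matrix.exists_mulVec_eq_zero_iff).mpr hd
    have h1 : ∀ i, 0 ≤ v i := key_mono M hMoff hMrow v (by rw [hv]; intro i; simp)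
    have h2 : ∀ i, 0 ≤ (-v) i := by
      apply key_mono M hMoff hMrow
      intro i
      rw [Matrix.mulVec_neg, hv]
      simp
    apply hv0
    ext i
    have := h1 i; have := h2 i
    simp only [Pi.neg_apply] at this
    simp only [Pi.zero_apply]
    linarith
  have hU : IsUnit M.det := isUnit_iff_ne_zero.mpr hdet
  have hMMinv : M * M⁻¹ = 1 := Matrix.mul_nonsing_inv M hU
  -- M⁻¹ has nonnegative entries
  have hInvNonneg : ∀ i j, 0 ≤ M⁻¹ i j := by
    intro i j
    have h := key_mono M hMoff hMrow (M⁻¹ *ᵥ Pi.single j 1)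
      (by
        rw [Matrix.mulVec_mulVec, hMMinv, Matrix.one_mulVec]
        intro k
        rcases eq_or_ne k j with rfl | hkj
        · simp
        · simp [Pi.single_eq_of_ne hkj])
    have := h i
    simpa using this
  -- M⁻¹ *ᵥ 1 ≤ 1
  have hInvRow : ∀ i, (M⁻¹ *ᵥ (fun _ => (1 : ℝ))) i ≤ 1 := by
    intro i
    have h := key_mono M hMoff hMrow ((fun _ => (1 : ℝ)) - M⁻¹ *ᵥ (fun _ => (1 : ℝ)))
      (by
        intro k
        rw [Matrix.mulVec_sub, Matrix.mulVec_mulVec, hMMinv, Matrix.one_mulVec]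
        simp only [Pi.sub_apply]
        linarith [hMrow1 k])
    have := h i
    simp only [Pi.sub_apply] at this
    linarith
  -- B = α⁻¹ • (1 - M⁻¹)
  have hB : A * M⁻¹ = α⁻¹ • ((1 : Matrix (Fin n) (Fin n) ℝ) - M⁻¹) := by
    have hA : A = α⁻¹ • (M - 1) := by
      rw [hM]
      simp only [add_sub_cancel_left, smul_smul, inv_mul_cancel₀ (ne_of_gt hα0), one_smul]
    rw [hA, Matrix.smul_mul, Matrix.sub_mul, hMMinv, Matrix.one_mul]
  -- symmetry of M⁻¹
  have hMsym : Mᵀ = M := by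
    rw [hM, Matrix.transpose_add, Matrix.transpose_one, Matrix.transpose_smul, hsym]
  have hInvSym : (M⁻¹)ᵀ = M⁻¹ := by
    rw [Matrix.transpose_nonsing_inv, hMsym]
  refine ⟨?_, ?_, ?_⟩
  · show (A * M⁻¹)ᵀ = A * M⁻¹
    rw [hB, Matrix.transpose_smul, Matrix.transpose_sub, Matrix.transpose_one, hInvSym]
  · intro i j hij
    rw [hB]
    simp only [Matrix.smul_apply, Matrix.sub_apply, Matrix.one_apply_ne hij, smul_eq_mul]
    have := hInvNonneg i j
    have h0 : (0:ℝ) ≤ α⁻¹ := le_of_lt (inv_pos.mpr hα0)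
    nlinarith
  · intro i
    rw [hB, Matrix.smul_mulVec, Matrix.sub_mulVec, Matrix.one_mulVec]
    simp only [Pi.smul_apply, Pi.sub_apply, smul_eq_mul]
    have := hInvRow i
    have h0 : (0:ℝ) ≤ α⁻¹ := le_of_lt (inv_pos.mpr hα0)
    nlinarith
end

section
/- Let X and Δ be symmetric positive semidefinite n×n matrices with X positive definite, and suppose Δ ⪯ δX for some 0 ≤ δ < 1. Then (X − Δ)⁻¹ ⪯ X⁻¹ + (1/(1−δ))·X⁻¹ΔX⁻¹ and (X + Δ)⁻¹ ⪯ X⁻¹ − (1/(1+δ))·X⁻¹ΔX⁻¹. -/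
open Matrix

private lemma eig_le {n : ℕ} (S : Matrix (Fin n) (Fin n) ℝ) (δ : ℝ) (hS : S.PosSemidef)
    (hdom : ((δ • (1 : Matrix (Fin n) (Fin n) ℝ)) - S).PosSemidef) (j : Fin n) :
    hS.1.eigenvalues j ≤ δ := by
  set v : Fin n → ℝ := ⇑(hS.1.eigenvectorBasis j) with hvdef
  have hv : S *ᵥ v = hS.1.eigenvalues j • v := hS.1.mulVec_eigenvectorBasis j
  have hnorm : v ⬝ᵥ v = 1 := by
    have h1 := hS.1.eigenvectorBasis.orthonormal.1 j
    have h2 : (inner ℝ (hS.1.eigenvectorBasis j) (hS.1.eigenvectorBasis j) : ℝ) = v ⬝ᵥ v := by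
      rw [EuclideanSpace.inner_eq_star_dotProduct]; simp [hvdef]
    rw [← h2, real_inner_self_eq_norm_sq, h1]; norm_num
  have h2 := hdom.dotProduct_mulVec_nonneg v
  simp only [sub_mulVec, smul_mulVec, hv, dotProduct_sub, dotProduct_smul, one_mulVec,
    star_trivial, hnorm, smul_eq_mul, mul_one] at h2
  linarith

private lemma aux_psd {n : ℕ} (S : Matrix (Fin n) (Fin n) ℝ) (hSsd : S.PosSemidef) (δ c t : ℝ)
    (hdom : ((δ • (1 : Matrix (Fin n) (Fin n) ℝ)) - S).PosSemidef)
    (hpos : ∀ l : ℝ, 0 ≤ l → l ≤ δ → 1 + t * l ≠ 0)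
    (hf : ∀ l : ℝ, 0 ≤ l → l ≤ δ → 0 ≤ 1 + c * l - (1 + t * l)⁻¹) :
    ((1 : Matrix (Fin n) (Fin n) ℝ) + c • S - (1 + t • S)⁻¹).PosSemidef := by
  classical
  have hS : S.IsHermitian := hSsd.1
  set U : Matrix (Fin n) (Fin n) ℝ := (IsHermitian.eigenvectorUnitary hS : Matrix (Fin n) (Fin n) ℝ) with hUdef
  set lam : Fin n → ℝ := hS.eigenvalues with hlamdef
  have hU1 : U * star U = 1 := (Matrix.mem_unitaryGroup_iff).mp (IsHermitian.eigenvectorUnitary hS).2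
  have hU2 : star U * U = 1 := (Matrix.mem_unitaryGroup_iff').mp (IsHermitian.eigenvectorUnitary hS).2
  set M : (Fin n → ℝ) → Matrix (Fin n) (Fin n) ℝ := fun w => U * diagonal w * star U with hMdef
  have hMmul : ∀ w w', M w * M w' = M (w * w') := by
    intro w w'
    simp only [hMdef]
    have h : diagonal w * (star U * U * diagonal w') = diagonal (w * w') := by
      rw [hU2, Matrix.one_mul, diagonal_mul_diagonal]; rfl
    calc U * diagonal w * star U * (U * diagonal w' * star U)
        = U * (diagonal w * (star U * U * diagonal w')) * star U := by noncomm_ring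
      _ = U * diagonal (w * w') * star U := by rw [h]
  have hM1 : M 1 = 1 := by
    simp only [hMdef, Pi.one_def, diagonal_one, Matrix.mul_one, hU1]
  have hMS : S = M lam := by
    have := hS.spectral_theorem
    simpa [hMdef, hUdef, hlamdef] using this
  have hMadd : ∀ w w', M w + M w' = M (w + w') := by
    intro w w'
    simp only [hMdef]
    have h : diagonal (w + w') = diagonal w + diagonal w' := by rw [diagonal_add]; rfl
    rw [h, Matrix.mul_add, Matrix.add_mul]
  have hMsub : ∀ w w', M w - M w' = M (w - w') := by
    intro w w'
    simp only [hMdef]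
    have h : diagonal (w - w') = diagonal w - diagonal w' := by rw [diagonal_sub]; rfl
    rw [h, Matrix.mul_sub, Matrix.sub_mul]
  have hMsmul : ∀ (a : ℝ) w, a • M w = M (a • w) := by
    intro a w
    simp only [hMdef, diagonal_smul, Matrix.smul_mul, Matrix.mul_smul]
  have hlam0 : ∀ j, 0 ≤ lam j := fun j => hSsd.eigenvalues_nonneg j
  have hlamδ : ∀ j, lam j ≤ δ := fun j => eig_le S δ hSsd hdom j
  have hMinv : ∀ w : Fin n → ℝ, (∀ i, w i ≠ 0) → (M w)⁻¹ = M w⁻¹ := by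
    intro w hw
    apply Matrix.inv_eq_right_inv
    rw [hMmul]
    have : w * w⁻¹ = 1 := by funext i; exact mul_inv_cancel₀ (hw i)
    rw [this, hM1]
  have hMpsd : ∀ w : Fin n → ℝ, (∀ i, 0 ≤ w i) → (M w).PosSemidef := by
    intro w hw
    have hd : (diagonal w).PosSemidef := posSemidef_diagonal_iff.mpr hw
    have := hd.mul_mul_conjTranspose_same U
    simpa [hMdef, Matrix.star_eq_conjTranspose] using this
  have key : (1 : Matrix (Fin n) (Fin n) ℝ) + c • S - (1 + t • S)⁻¹
      = M (fun j => 1 + c * lam j - (1 + t * lam j)⁻¹) := by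
    rw [hMS]
    simp only [hMsmul]
    rw [← hM1, hMadd, hMadd,
      hMinv _ (fun i => by simpa using hpos (lam i) (hlam0 i) (hlamδ i)), hMsub]
    congr 1
  rw [key]
  exact hMpsd _ (fun j => hf _ (hlam0 j) (hlamδ j))


/-- If `X` is symmetric positive definite, `Δ` is symmetric PSD with `Δ ⪯ δ X` for
`0 ≤ δ < 1`, then `(X - Δ)⁻¹ ⪯ X⁻¹ + (1/(1-δ)) X⁻¹ Δ X⁻¹` and
`(X + Δ)⁻¹ ⪯ X⁻¹ - (1/(1+δ)) X⁻¹ Δ X⁻¹`. -/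
theorem inverse_perturbation_bounds {n : ℕ} (X Δ : Matrix (Fin n) (Fin n) ℝ) (δ : ℝ)
    (hX : X.PosDef) (hΔ : Δ.PosSemidef)
    (hδ0 : 0 ≤ δ) (hδ1 : δ < 1)
    (hdom : (δ • X - Δ).PosSemidef) :
    ((X⁻¹ + (1 / (1 - δ)) • (X⁻¹ * Δ * X⁻¹)) - (X - Δ)⁻¹).PosSemidef ∧
    ((X⁻¹ - (1 / (1 + δ)) • (X⁻¹ * Δ * X⁻¹)) - (X + Δ)⁻¹).PosSemidef := by
  classical
  have hXsd := hX.posSemidef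
  set R := (open scoped MatrixOrder in CFC.sqrt X) with hRdef
  have hRsd : R.PosSemidef := (open scoped MatrixOrder in (CFC.sqrt_nonneg X).posSemidef)
  have hRR : R * R = X := (open scoped MatrixOrder in CFC.sqrt_mul_sqrt_self X hXsd.nonneg)
  have hRdet : IsUnit R.det := by
    have h : R.det * R.det = X.det := by rw [← det_mul, hRR]
    have hXdet : 0 < X.det := hX.det_pos
    refine isUnit_iff_ne_zero.mpr fun h0 => ?_
    rw [h0, mul_zero] at h; linarith
  have hBR : R⁻¹ * R = 1 := nonsing_inv_mul R hRdet
  have hRB : R * R⁻¹ = 1 := mul_nonsing_inv R hRdet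
  set B := R⁻¹ with hBdef
  have hBH : Bᴴ = B := by rw [hBdef, conjTranspose_nonsing_inv, hRsd.1]
  have hXinv : X⁻¹ = B * B := by rw [← hRR, Matrix.mul_inv_rev]
  set S := B * Δ * B with hSdef
  have hSsd : S.PosSemidef := by
    have h := hΔ.mul_mul_conjTranspose_same B
    rwa [hBH] at h
  have hBXB : B * X * B = 1 := by
    rw [← hRR, ← Matrix.mul_assoc, hBR, Matrix.one_mul, hRB]
  have hdom' : ((δ • (1 : Matrix (Fin n) (Fin n) ℝ)) - S).PosSemidef := by
    have h := hdom.mul_mul_conjTranspose_same B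
    rw [hBH] at h
    have e : B * (δ • X - Δ) * B = δ • (1 : Matrix (Fin n) (Fin n) ℝ) - S := by
      rw [Matrix.mul_sub, Matrix.sub_mul, Matrix.mul_smul, Matrix.smul_mul, hBXB, hSdef]
    rwa [e] at h
  have hRSR : R * S * R = Δ := by
    calc R * (B * Δ * B) * R = (R * B) * Δ * (B * R) := by noncomm_ring
      _ = Δ := by rw [hRB, hBR, Matrix.one_mul, Matrix.mul_one]
  have hXinvΔ : X⁻¹ * Δ * X⁻¹ = B * S * B := by
    rw [hXinv, hSdef]; noncomm_ring
  have hfac : ∀ t : ℝ, X + t • Δ = R * (1 + t • S) * R := by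
    intro t
    rw [Matrix.mul_add, Matrix.add_mul, Matrix.mul_one, hRR, Matrix.mul_smul, Matrix.smul_mul,
      hRSR]
  have hfacinv : ∀ t : ℝ, (X + t • Δ)⁻¹ = B * (1 + t • S)⁻¹ * B := by
    intro t
    rw [hfac t, Matrix.mul_inv_rev, Matrix.mul_inv_rev, Matrix.mul_assoc]
  have key : ∀ c t : ℝ,
      ((1 : Matrix (Fin n) (Fin n) ℝ) + c • S - (1 + t • S)⁻¹).PosSemidef →
      ((X⁻¹ + c • (X⁻¹ * Δ * X⁻¹)) - (X + t • Δ)⁻¹).PosSemidef := by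
    intro c t hN
    have e : (X⁻¹ + c • (X⁻¹ * Δ * X⁻¹)) - (X + t • Δ)⁻¹
        = B * ((1 : Matrix (Fin n) (Fin n) ℝ) + c • S - (1 + t • S)⁻¹) * Bᴴ := by
      rw [hBH, hXinvΔ, hXinv, hfacinv t]
      simp only [Matrix.mul_add, Matrix.add_mul, Matrix.mul_sub, Matrix.sub_mul,
        Matrix.mul_smul, Matrix.smul_mul, Matrix.mul_one, Matrix.one_mul, Matrix.mul_assoc]
    rw [e]
    exact hN.mul_mul_conjTranspose_same B
  have h1δ : (0:ℝ) < 1 - δ := by linarith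
  have h2δ : (0:ℝ) < 1 + δ := by linarith
  constructor
  · rw [show X - Δ = X + (-1:ℝ) • Δ by rw [neg_one_smul, ← sub_eq_add_neg]]
    refine key _ _ (aux_psd S hSsd δ _ (-1) hdom' (fun l h0 hl => by nlinarith) ?_)
    intro l h0 hl
    have h1l : (0:ℝ) < 1 - l := by linarith
    have e : 1 + (1/(1-δ))*l - (1 + (-1)*l)⁻¹ = l*(δ-l)/((1-l)*(1-δ)) := by
      rw [show 1 + (-1)*l = 1 - l by ring]
      rw [eq_div_iff (by positivity)]
      field_simp
      ring
    rw [e]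
    exact div_nonneg (mul_nonneg h0 (by linarith)) (le_of_lt (mul_pos h1l h1δ))
  · rw [sub_eq_add_neg (X⁻¹), ← neg_smul, show X + Δ = X + (1:ℝ) • Δ by rw [one_smul]]
    refine key _ _ (aux_psd S hSsd δ _ 1 hdom' (fun l h0 hl => by nlinarith) ?_)
    intro l h0 hl
    have h1l : (0:ℝ) < 1 + l := by linarith
    have e : 1 + (-(1/(1+δ)))*l - (1 + 1*l)⁻¹ = l*(δ-l)/((1+l)*(1+δ)) := by
      rw [show 1 + 1*l = 1 + l by ring]
      rw [eq_div_iff (by positivity)]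
      field_simp
      ring
    rw [e]
    exact div_nonneg (mul_nonneg h0 (by linarith)) (le_of_lt (mul_pos h1l h2δ))
end
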